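/- Let q be a real number with q > 1 and m ≥ 1 an integer. For 1 ≤ k ≤ m+1 define c_k = (1 - q^{-(2k-1)}) · q^{-2k^2+3k-1} / (q^{-2};q^{-2})_{k-1} · ( (q^{-2k};q^{-2})_{m-k+1} / (q^{-2};q^{-2})_{m-k+1} ) · q^{-1-m+k}. Then Σ_{k=1}^{m+1} c_k = 1/( q^m (1/q^2; 1/q^2)_m ) + (1/q^{m+1}) · Σ_{i=0}^{m} (-1)^{i-1} / ( q^{i(i+1)} (1/q^2; 1/q^2)_{m-i} ). -/

import Mathlib

/-!
Put `Q = q⁻²`. After the shift `k = j + 1` the powers of `q` in `c_k` collapse to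
`q⁻ᵐ Q^{j²} - q^{-m-1} Q^{j²+j}`, and `(Q^{j+1}; Q)_{m-j} / (Q; Q)_{m-j}` is the Gaussian
binomial `[m, j]_Q`. The sum is therefore `q⁻ᵐ S(1, Q) - q^{-m-1} S(Q, Q)` with
`S(a, b) = ∑_j Q^{j²} aʲ [m, j]_Q / (b; Q)_j`.

The q-Pascal rule expresses `S` at `m + 1` through `S` at `m` with `(a, b)` replaced by
`(aQ, bQ)`, so both sums are evaluated by induction on `m`, uniformly in `a`:
`S(a, aQ) = 1 / (aQ; Q)_m` (a finite Durfee-square identity), and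
`S(a, a) = (Q; Q)_m / (a; Q)_m · ∑_i (-1)ⁱ aⁱ Q^{i(i-1)/2} / (Q; Q)_{m-i}`,
where the alternating sum obeys a three-term recurrence in `m` and `a ↦ aQ`.
-/

/-- The q-Pochhammer symbol `(a; Q)_n = ∏_{j=0}^{n-1} (1 - a Q^j)` over the reals. -/
noncomputable def qPoch (a Q : ℝ) (n : ℕ) : ℝ := ∏ j ∈ Finset.range n, (1 - a * Q ^ j)

open Finset

lemma qPoch_zero (a Q : ℝ) : qPoch a Q 0 = 1 := prod_range_zero _

lemma qPoch_succ (a Q : ℝ) (n : ℕ) : qPoch a Q (n + 1) = qPoch a Q n * (1 - a * Q ^ n) :=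
  prod_range_succ _ _

lemma qPoch_add (a Q : ℝ) (s t : ℕ) :
    qPoch a Q (s + t) = qPoch a Q s * qPoch (a * Q ^ s) Q t := by
  simp only [qPoch, prod_range_add, pow_add, mul_assoc]

lemma qPoch_succ' (a Q : ℝ) (n : ℕ) : qPoch a Q (n + 1) = (1 - a) * qPoch (a * Q) Q n := by
  rw [add_comm, qPoch_add, pow_one, qPoch_succ, qPoch_zero, one_mul, pow_zero, mul_one]

lemma one_sub_mul_pow_pos {a Q : ℝ} (hQ0 : 0 ≤ Q) (hQ1 : Q ≤ 1) (ha : a < 1) (n : ℕ) :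
    0 < 1 - a * Q ^ n := by
  have := pow_le_one₀ hQ0 hQ1 (n := n)
  rcases le_or_gt 0 a with h | h <;> nlinarith [pow_nonneg hQ0 n]

lemma qPoch_pos {a Q : ℝ} (hQ0 : 0 ≤ Q) (hQ1 : Q ≤ 1) (ha : a < 1) (n : ℕ) :
    0 < qPoch a Q n :=
  prod_pos fun j _ => one_sub_mul_pow_pos hQ0 hQ1 ha j

lemma one_sub_mul_pow_div_qPoch_succ {a Q : ℝ} {m : ℕ} (h : 1 - a * Q ^ m ≠ 0) :
    (1 - a * Q ^ m) / qPoch a Q (m + 1) = 1 / qPoch a Q m := by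
  rw [qPoch_succ, div_mul_cancel_right₀ h, one_div]

section

variable {Q : ℝ}

lemma qPoch_self_ne_zero (hQ0 : 0 ≤ Q) (hQ1 : Q < 1) (n : ℕ) : qPoch Q Q n ≠ 0 :=
  (qPoch_pos hQ0 hQ1.le hQ1 n).ne'

noncomputable def qBinom (Q : ℝ) (m j : ℕ) : ℝ :=
  if j ≤ m then qPoch Q Q m / (qPoch Q Q j * qPoch Q Q (m - j)) else 0

lemma qBinom_eq_qPoch_div (hQ0 : 0 ≤ Q) (hQ1 : Q < 1) {m j : ℕ} (h : j ≤ m) :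
    qBinom Q m j = qPoch (Q ^ (j + 1)) Q (m - j) / qPoch Q Q (m - j) := by
  have hm := qPoch_add Q Q j (m - j)
  rw [Nat.add_sub_cancel' h, ← pow_succ'] at hm
  rw [qBinom, if_pos h, hm, mul_div_mul_left _ _ (qPoch_self_ne_zero hQ0 hQ1 j)]

lemma qBinom_zero_right (hQ0 : 0 ≤ Q) (hQ1 : Q < 1) (m : ℕ) : qBinom Q m 0 = 1 := by
  simp [qBinom, qPoch_zero, qPoch_self_ne_zero hQ0 hQ1]

lemma qBinom_of_lt {m j : ℕ} (h : m < j) : qBinom Q m j = 0 := if_neg h.not_ge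

lemma qBinom_succ_succ (hQ0 : 0 ≤ Q) (hQ1 : Q < 1) (m j : ℕ) :
    qBinom Q (m + 1) (j + 1) = qBinom Q m (j + 1) + Q ^ (m - j) * qBinom Q m j := by
  have hP := qPoch_self_ne_zero hQ0 hQ1
  rcases lt_trichotomy j m with hjm | rfl | hmj
  · obtain ⟨d, rfl⟩ := Nat.exists_eq_add_of_lt hjm
    have := (one_sub_mul_pow_pos hQ0 hQ1.le hQ1 d).ne'
    have := (one_sub_mul_pow_pos hQ0 hQ1.le hQ1 j).ne'
    simp only [qBinom, if_pos (by omega : j + 1 ≤ j + d + 1 + 1),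
      if_pos (by omega : j + 1 ≤ j + d + 1), if_pos (by omega : j ≤ j + d + 1),
      show j + d + 1 + 1 - (j + 1) = d + 1 by omega,
      show j + d + 1 - (j + 1) = d by omega, show j + d + 1 - j = d + 1 by omega, qPoch_succ]
    have := hP (j + d + 1); have := hP j; have := hP d
    field_simp
    ring
  · simp [qBinom, qPoch_zero, hP]
  · rw [qBinom_of_lt (by omega), qBinom_of_lt (by omega), qBinom_of_lt hmj, mul_zero, add_zero]

noncomputable def durfeeSum (Q a b : ℝ) (m : ℕ) : ℝ :=
  ∑ j ∈ range (m + 1), Q ^ (j * j) * a ^ j * qBinom Q m j / qPoch b Q j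

lemma durfeeSum_zero (a b : ℝ) : durfeeSum Q a b 0 = 1 := by
  simp [durfeeSum, qBinom, qPoch_zero]

lemma durfeeSum_succ (hQ0 : 0 ≤ Q) (hQ1 : Q < 1) (a b : ℝ) (m : ℕ) :
    durfeeSum Q a b (m + 1)
      = durfeeSum Q a b m + a * Q ^ (m + 1) / (1 - b) * durfeeSum Q (a * Q) (b * Q) m := by
  have pascal : ∀ i ∈ range (m + 1),
      Q ^ ((i + 1) * (i + 1)) * a ^ (i + 1) * qBinom Q (m + 1) (i + 1) / qPoch b Q (i + 1)
        = Q ^ ((i + 1) * (i + 1)) * a ^ (i + 1) * qBinom Q m (i + 1) / qPoch b Q (i + 1)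
          + a * Q ^ (m + 1) / (1 - b)
            * (Q ^ (i * i) * (a * Q) ^ i * qBinom Q m i / qPoch (b * Q) Q i) := by
    intro i hi
    obtain ⟨d, rfl⟩ := Nat.exists_eq_add_of_le (Nat.lt_succ_iff.1 (mem_range.1 hi))
    rw [qBinom_succ_succ hQ0 hQ1, Nat.add_sub_cancel_left]
    simp only [qPoch_succ', ← div_div]
    ring
  have top : durfeeSum Q a b m
      = ∑ j ∈ range (m + 2), Q ^ (j * j) * a ^ j * qBinom Q m j / qPoch b Q j := by
    rw [sum_range_succ, qBinom_of_lt (Nat.lt_succ_self m), mul_zero, zero_div, add_zero, durfeeSum]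
  rw [top, durfeeSum, sum_range_succ' _ (m + 1), sum_range_succ' _ (m + 1), sum_congr rfl pascal,
    sum_add_distrib, ← mul_sum, durfeeSum, qBinom_zero_right hQ0 hQ1, qBinom_zero_right hQ0 hQ1]
  ring

lemma durfeeSum_eq_one_div_qPoch (hQ0 : 0 ≤ Q) (hQ1 : Q < 1) {a : ℝ} (ha : a ≤ 1) (m : ℕ) :
    durfeeSum Q a (a * Q) m = 1 / qPoch (a * Q) Q m := by
  induction m generalizing a with
  | zero => rw [durfeeSum_zero, qPoch_zero, div_one]
  | succ m ih =>
    have haQ : a * Q < 1 := by nlinarith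
    rw [durfeeSum_succ hQ0 hQ1, ih ha, ih haQ.le,
      ← one_sub_mul_pow_div_qPoch_succ (one_sub_mul_pow_pos hQ0 hQ1.le haQ m).ne', mul_one_div,
      div_div, ← qPoch_succ']
    ring

noncomputable def alternatingSum (Q a : ℝ) (m : ℕ) : ℝ :=
  ∑ i ∈ range (m + 1), (-1) ^ i * a ^ i * Q ^ i.choose 2 / qPoch Q Q (m - i)

lemma alternatingSum_zero (a : ℝ) : alternatingSum Q a 0 = 1 := by
  simp [alternatingSum, qPoch_zero]

lemma alternatingSum_succ (a : ℝ) (m : ℕ) :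
    alternatingSum Q a (m + 1) = 1 / qPoch Q Q (m + 1) - a * alternatingSum Q (a * Q) m := by
  rw [alternatingSum, sum_range_succ', alternatingSum, mul_sum, sub_eq_neg_add, ← sum_neg_distrib]
  congr 1
  · refine sum_congr rfl fun i _ => ?_
    rw [Nat.choose_succ_succ', Nat.choose_one_right, Nat.add_sub_add_right]
    ring
  · simp

lemma alternatingSum_recurrence (hQ0 : 0 ≤ Q) (hQ1 : Q < 1) (a : ℝ) (m : ℕ) :
    (1 - a * Q ^ m) * alternatingSum Q a m + a * alternatingSum Q (a * Q) m = 1 / qPoch Q Q m := by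
  induction m generalizing a with
  | zero => simp [alternatingSum_zero, qPoch_zero]
  | succ m ih =>
    rw [alternatingSum_succ, alternatingSum_succ]
    linear_combination (-a) * ih (a * Q)
      + a * one_sub_mul_pow_div_qPoch_succ (one_sub_mul_pow_pos hQ0 hQ1.le hQ1 m).ne'

lemma one_sub_mul_pow_mul_alternatingSum_succ (hQ0 : 0 ≤ Q) (hQ1 : Q < 1) (a : ℝ) (m : ℕ) :
    (1 - Q * Q ^ m) * alternatingSum Q a (m + 1)
      = (1 - a * Q ^ m) * alternatingSum Q a m + a * Q ^ (m + 1) * alternatingSum Q (a * Q) m := by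
  rw [alternatingSum_succ]
  linear_combination one_sub_mul_pow_div_qPoch_succ (one_sub_mul_pow_pos hQ0 hQ1.le hQ1 m).ne'
    - alternatingSum_recurrence hQ0 hQ1 a m

lemma durfeeSum_self (hQ0 : 0 ≤ Q) (hQ1 : Q < 1) {a : ℝ} (ha : a < 1) (m : ℕ) :
    durfeeSum Q a a m = qPoch Q Q m / qPoch a Q m * alternatingSum Q a m := by
  induction m generalizing a with
  | zero => simp [durfeeSum_zero, qPoch_zero, alternatingSum_zero]
  | succ m ih =>
    have haQ : a * Q < 1 := by nlinarith
    have hP1 := one_sub_mul_pow_div_qPoch_succ (one_sub_mul_pow_pos hQ0 hQ1.le ha m).ne'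
    rw [qPoch_succ', ← div_div] at hP1
    rw [durfeeSum_succ hQ0 hQ1, ih ha, ih haQ, qPoch_succ Q Q, qPoch_succ' a, ← div_div]
    linear_combination (-(qPoch Q Q m) / (1 - a) / qPoch (a * Q) Q m)
        * one_sub_mul_pow_mul_alternatingSum_succ hQ0 hQ1 a m
      - (qPoch Q Q m * alternatingSum Q a m) * hP1

end

lemma two_mul_add_choose_two (i : ℕ) : 2 * (i + i.choose 2) = i * (i + 1) := by
  induction i with
  | zero => rfl
  | succ n ih => rw [Nat.choose_succ_succ', Nat.choose_one_right]; nlinarith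

section

variable {q : ℝ}

lemma zpow_neg_two_pow (n : ℕ) : (q ^ (-2 : ℤ)) ^ n = q ^ (-2 * (n : ℤ)) := by
  rw [← zpow_natCast, ← zpow_mul]

lemma anzanello_summand_eq (hq : 1 < q) {m j : ℕ} (hj : j ≤ m) :
    (1 - q ^ (-(2 * ((j + 1 : ℕ) : ℤ) - 1)))
        * q ^ (-(2 * ((j + 1 : ℕ) : ℤ) ^ 2) + 3 * ((j + 1 : ℕ) : ℤ) - 1)
        / qPoch (q ^ (-2 : ℤ)) (q ^ (-2 : ℤ)) (j + 1 - 1)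
        * (qPoch (q ^ (-(2 * ((j + 1 : ℕ) : ℤ)))) (q ^ (-2 : ℤ)) (m + 1 - (j + 1))
            / qPoch (q ^ (-2 : ℤ)) (q ^ (-2 : ℤ)) (m + 1 - (j + 1)))
        * q ^ (-1 - (m : ℤ) + ((j + 1 : ℕ) : ℤ))
      = q ^ (-(m : ℤ)) * ((q ^ (-2 : ℤ)) ^ (j * j) * 1 ^ j * qBinom (q ^ (-2 : ℤ)) m j
            / qPoch (1 * q ^ (-2 : ℤ)) (q ^ (-2 : ℤ)) j)
        - q ^ (-(m : ℤ) - 1) * ((q ^ (-2 : ℤ)) ^ (j * j) * (q ^ (-2 : ℤ)) ^ j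
            * qBinom (q ^ (-2 : ℤ)) m j / qPoch (q ^ (-2 : ℤ)) (q ^ (-2 : ℤ)) j) := by
  have hq0 : q ≠ 0 := by positivity
  have hQ0 : 0 ≤ q ^ (-2 : ℤ) := by positivity
  have hQ1 : q ^ (-2 : ℤ) < 1 := zpow_lt_one_of_neg₀ hq (by norm_num)
  have key : (1 - q ^ (-(2 * ((j + 1 : ℕ) : ℤ) - 1)))
        * q ^ (-(2 * ((j + 1 : ℕ) : ℤ) ^ 2) + 3 * ((j + 1 : ℕ) : ℤ) - 1)
        * q ^ (-1 - (m : ℤ) + ((j + 1 : ℕ) : ℤ))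
      = q ^ (-(m : ℤ)) * q ^ (-2 * ((j * j : ℕ) : ℤ))
        - q ^ (-(m : ℤ) - 1) * q ^ (-2 * ((j * j : ℕ) : ℤ)) * q ^ (-2 * (j : ℤ)) := by
    simp only [sub_mul, one_mul, ← zpow_add₀ hq0]
    congr 2 <;> push_cast <;> ring
  rw [Nat.add_sub_cancel, Nat.add_sub_add_right,
    show -(2 * ((j + 1 : ℕ) : ℤ)) = -2 * ((j + 1 : ℕ) : ℤ) by ring, ← zpow_neg_two_pow,
    ← qBinom_eq_qPoch_div hQ0 hQ1 hj, one_pow, one_mul, mul_one, zpow_neg_two_pow,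
    zpow_neg_two_pow]
  linear_combination (qBinom (q ^ (-2 : ℤ)) m j / qPoch (q ^ (-2 : ℤ)) (q ^ (-2 : ℤ)) j) * key

lemma neg_one_zpow_div_eq (i : ℕ) (x : ℝ) :
    (-1 : ℝ) ^ ((i : ℤ) - 1) / (q ^ (i * (i + 1)) * x)
      = -((-1) ^ i * (q ^ (-2 : ℤ)) ^ i * (q ^ (-2 : ℤ)) ^ i.choose 2 / x) := by
  have hsign : (-1 : ℝ) ^ ((i : ℤ) - 1) = -(-1) ^ i := by
    rw [zpow_sub₀ (by norm_num), zpow_one, zpow_natCast, div_neg, div_one]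
  have hpow : (q ^ (-2 : ℤ)) ^ i * (q ^ (-2 : ℤ)) ^ i.choose 2 = (q ^ (i * (i + 1)))⁻¹ := by
    rw [← pow_add, zpow_neg_two_pow, ← zpow_natCast, ← zpow_neg, ← two_mul_add_choose_two]
    push_cast
    ring_nf
  rw [hsign, mul_assoc _ ((q ^ (-2 : ℤ)) ^ i), hpow]
  ring

end

theorem anzanello_c_sum_general (q : ℝ) (hq : 1 < q) (m : ℕ) :
    ∑ k ∈ Finset.Icc 1 (m + 1),
      (1 - q ^ (-(2 * (k : ℤ) - 1))) * q ^ (-(2 * (k : ℤ) ^ 2) + 3 * k - 1)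
        / qPoch (q ^ (-2 : ℤ)) (q ^ (-2 : ℤ)) (k - 1)
        * (qPoch (q ^ (-(2 * (k : ℤ)))) (q ^ (-2 : ℤ)) (m + 1 - k)
            / qPoch (q ^ (-2 : ℤ)) (q ^ (-2 : ℤ)) (m + 1 - k))
        * q ^ (-1 - (m : ℤ) + k)
    = 1 / (q ^ m * qPoch (q ^ (-2 : ℤ)) (q ^ (-2 : ℤ)) m)
      + 1 / q ^ (m + 1) * ∑ i ∈ Finset.range (m + 1),
          (-1 : ℝ) ^ ((i : ℤ) - 1)
            / (q ^ (i * (i + 1)) * qPoch (q ^ (-2 : ℤ)) (q ^ (-2 : ℤ)) (m - i)) := by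
  have hQ0 : 0 ≤ q ^ (-2 : ℤ) := by positivity
  have hQ1 : q ^ (-2 : ℤ) < 1 := zpow_lt_one_of_neg₀ hq (by norm_num)
  have reindex (f : ℕ → ℝ) : ∑ k ∈ Icc 1 (m + 1), f k = ∑ j ∈ range (m + 1), f (j + 1) := by
    rw [range_eq_Ico, sum_Ico_add', Ico_add_one_right_eq_Icc]
  rw [reindex,
    sum_congr rfl fun j hj => anzanello_summand_eq hq (Nat.lt_succ_iff.1 (mem_range.1 hj)),
    sum_sub_distrib, ← mul_sum, ← mul_sum, ← durfeeSum, ← durfeeSum,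
    durfeeSum_eq_one_div_qPoch hQ0 hQ1 le_rfl, durfeeSum_self hQ0 hQ1 hQ1,
    sum_congr rfl fun i _ => neg_one_zpow_div_eq i _, sum_neg_distrib, ← alternatingSum]
  rw [one_mul, div_self (qPoch_self_ne_zero hQ0 hQ1 m),
    show -(m : ℤ) - 1 = -((m + 1 : ℕ) : ℤ) by push_cast; ring, zpow_neg q m,
    zpow_neg q (m + 1 : ℕ), zpow_natCast, zpow_natCast]
  ring

theorem anzanello_c_sum (q : ℝ) (hq : 1 < q) (m : ℕ) (hm : 1 ≤ m) :
    ∑ k ∈ Finset.Icc 1 (m + 1),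
      (1 - q ^ (-(2 * (k : ℤ) - 1))) * q ^ (-(2 * (k : ℤ) ^ 2) + 3 * k - 1)
        / qPoch (q ^ (-2 : ℤ)) (q ^ (-2 : ℤ)) (k - 1)
        * (qPoch (q ^ (-(2 * (k : ℤ)))) (q ^ (-2 : ℤ)) (m + 1 - k)
            / qPoch (q ^ (-2 : ℤ)) (q ^ (-2 : ℤ)) (m + 1 - k))
        * q ^ (-1 - (m : ℤ) + k)
    = 1 / (q ^ m * qPoch (q ^ (-2 : ℤ)) (q ^ (-2 : ℤ)) m)
      + 1 / q ^ (m + 1) * ∑ i ∈ Finset.range (m + 1),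
          (-1 : ℝ) ^ ((i : ℤ) - 1)
            / (q ^ (i * (i + 1)) * qPoch (q ^ (-2 : ℤ)) (q ^ (-2 : ℤ)) (m - i)) :=
  anzanello_c_sum_general q hq m
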